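/- arXiv:2104.15113 — 2 statements merged into one kernel-verified Lean document; each statement's English description precedes it below -/
import Mathlib

section
/- Let G' be a graph with a spanning tree T'; colour the edges of T' green and all other edges of G' black. If (G,T) is obtained from (G',T') by either a Tutte-extension or a diamond-extension, then G − E(T) decomposes into a disjoint union of cycles and a matching if and only if G' − E(T') does. -/
open SimpleGraph

/-- A (finite) simple graph is *cubic* if every vertex has exactly three neighbours. -/
def IsCubic {V : Type*} (G : SimpleGraph V) : Prop :=
  ∀ a : V, (G.neighborSet a).ncard = 3

/-- `(T, C, M)` is a *3-decomposition* of `G`: the edge set of `G` is partitioned into a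
spanning tree `T`, a 2-regular subgraph `C` and a (possibly empty) matching `M`. -/
def IsThreeDecomposition {V : Type*} (G T C M : SimpleGraph V) : Prop :=
  T.edgeSet ∪ C.edgeSet ∪ M.edgeSet = G.edgeSet ∧
  Disjoint T.edgeSet C.edgeSet ∧
  Disjoint T.edgeSet M.edgeSet ∧
  Disjoint C.edgeSet M.edgeSet ∧
  T.IsTree ∧
  (∀ a : V, (C.neighborSet a).ncard = 0 ∨ (C.neighborSet a).ncard = 2) ∧
  (∀ a : V, (M.neighborSet a).ncard ≤ 1)

def HasThreeDecomposition {V : Type*} (G : SimpleGraph V) : Prop :=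
  ∃ T C M : SimpleGraph V, IsThreeDecomposition G T C M

/-- A graph is *3-connected* if it has more than three vertices and stays connected after
removing any set of at most two vertices. -/
def ThreeConnected {V : Type*} (G : SimpleGraph V) : Prop :=
  3 < Nat.card V ∧ ∀ s : Set V, s.ncard ≤ 2 → (SimpleGraph.induce sᶜ G).Connected

/-- `G` contains a subgraph isomorphic to `S`. -/
def ContainsCopy {α V : Type*} (S : SimpleGraph α) (G : SimpleGraph V) : Prop :=
  ∃ f : α ↪ V, ∀ a b : α, S.Adj a b → G.Adj (f a) (f b)

/-- `G` is a minimum-order counterexample to the 3-decomposition conjecture among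
3-connected cubic graphs. -/
def IsMinCounterexample {V : Type*} (G : SimpleGraph V) : Prop :=
  Finite V ∧ IsCubic G ∧ ThreeConnected G ∧ ¬ HasThreeDecomposition G ∧
  ∀ (W : Type) (H : SimpleGraph W), Finite W → IsCubic H → ThreeConnected H →
    ¬ HasThreeDecomposition H → Nat.card V ≤ Nat.card W

/-- A graph `S` is a *reducible configuration* if no minimum-order 3-connected
counterexample to the 3-decomposition conjecture contains it as a subgraph. -/
def Reducible {α : Type*} (S : SimpleGraph α) : Prop :=
  ∀ (V : Type) (G : SimpleGraph V), IsMinCounterexample G → ¬ ContainsCopy S G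

/-! ### The six configurations -/

def triangle : SimpleGraph (Fin 3) := ⊤

def k23 : SimpleGraph (Fin 2 ⊕ Fin 3) := completeBipartiteGraph (Fin 2) (Fin 3)

/-- The domino: two squares sharing an edge (`u5u6`); vertices `u1,…,u6 ~ 0,…,5`. -/
def domino : SimpleGraph (Fin 6) :=
  SimpleGraph.fromEdgeSet {s(0, 1), s(0, 4), s(1, 5), s(4, 5), s(2, 4), s(3, 5), s(2, 3)}

/-- The twin-house; vertices `u1,…,u6 ~ 0,…,5`. -/
def twinHouse : SimpleGraph (Fin 6) :=
  SimpleGraph.fromEdgeSet {s(0, 1), s(0, 4), s(1, 5), s(2, 4), s(2, 5), s(3, 4), s(3, 5)}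

/-- The claw-square: a square `w1w2w3w4 ~ 0,1,2,3`, a claw with centre `c ~ 4` and leaves
`l1,l2,l3 ~ 5,6,7`, together with the edges `l1w1, l2w2, l3w3`. -/
def clawSquare : SimpleGraph (Fin 8) :=
  SimpleGraph.fromEdgeSet
    {s(0, 1), s(1, 2), s(2, 3), s(3, 0), s(4, 5), s(4, 6), s(4, 7), s(5, 0), s(6, 1), s(7, 2)}

/-- The Petersen graph: outer 5-cycle on `inl`, inner pentagram on `inr`, plus spokes. -/
def petersen : SimpleGraph (Fin 5 ⊕ Fin 5) :=
  SimpleGraph.fromRel fun a b =>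
    match a, b with
    | Sum.inl i, Sum.inl j => j = i + 1
    | Sum.inl i, Sum.inr j => i = j
    | Sum.inr i, Sum.inr j => j = i + 2
    | _, _ => False

/-- The Petersen graph with the vertex `inl 0` removed. -/
def petersenMinusVertex : SimpleGraph {v : Fin 5 ⊕ Fin 5 | v ≠ Sum.inl 0} :=
  SimpleGraph.induce {v : Fin 5 ⊕ Fin 5 | v ≠ Sum.inl 0} petersen
/-! ### Templates and transformations -/

/-- `X` is a template graph: inner vertices (`inl`) have degree 3, outer vertices (`inr`)
have degree 1. -/
def IsTemplate {I O : Type*} (X : SimpleGraph (I ⊕ O)) : Prop :=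
  (∀ i : I, (X.neighborSet (Sum.inl i)).ncard = 3) ∧
  (∀ o : O, (X.neighborSet (Sum.inr o)).ncard = 1)

/-- The result of removing the copy (under `φ`) of the core of a template graph from `G`
and replacing it by the core of the template graph `Y`, attaching the core of `Y` to the
rest of `G` according to the outer vertices (the attachment being recorded by `ψ`). -/
def transform {I J O V : Type*} (Y : SimpleGraph (J ⊕ O)) (G : SimpleGraph V)
    (φ : I ↪ V) (ψ : O → {a : V // a ∉ Set.range φ}) :
    SimpleGraph ({a : V // a ∉ Set.range φ} ⊕ J) :=
  SimpleGraph.fromRel fun x y =>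
    match x, y with
    | Sum.inl a, Sum.inl b => G.Adj a.1 b.1
    | Sum.inr j, Sum.inl a => ∃ o : O, Y.Adj (Sum.inl j) (Sum.inr o) ∧ ψ o = a
    | Sum.inr j, Sum.inr j' => Y.Adj (Sum.inl j) (Sum.inl j')
    | Sum.inl _, Sum.inr _ => False

/-- `φ` embeds the core of the template graph `X` into `G` as an induced subgraph, and for
every inner vertex `i` the neighbours of `φ i` outside the copy are exactly the images under
`ψ` of the outer vertices of `X` attached to `i` (one distinct neighbour for each). -/
def IsCoreEmbedding {I O V : Type*} (X : SimpleGraph (I ⊕ O)) (G : SimpleGraph V)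
    (φ : I ↪ V) (ψ : O → {a : V // a ∉ Set.range φ}) : Prop :=
  (∀ i i' : I, G.Adj (φ i) (φ i') ↔ X.Adj (Sum.inl i) (Sum.inl i')) ∧
  (∀ (i : I) (a : {a : V // a ∉ Set.range φ}),
    G.Adj (φ i) a.1 ↔ ∃ o : O, X.Adj (Sum.inl i) (Sum.inr o) ∧ ψ o = a) ∧
  (∀ i : I, Set.InjOn ψ {o : O | X.Adj (Sum.inl i) (Sum.inr o)})

/-- The transformation along `Y` with attachments `ψ` produces no parallel edges
(the result is a simple graph). -/
def AttachSimple {J O α : Type*} (Y : SimpleGraph (J ⊕ O)) (ψ : O → α) : Prop :=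
  ∀ j : J, Set.InjOn ψ {o : O | Y.Adj (Sum.inl j) (Sum.inr o)}

/-- `H` is an `(X,Y)`-transformation of `G`. -/
def IsTransformationOf {I J O V W : Type*} (X : SimpleGraph (I ⊕ O)) (Y : SimpleGraph (J ⊕ O))
    (G : SimpleGraph V) (H : SimpleGraph W) : Prop :=
  ∃ (φ : I ↪ V) (ψ : O → {a : V // a ∉ Set.range φ}),
    IsCoreEmbedding X G φ ψ ∧ AttachSimple Y ψ ∧ Nonempty (H ≃g transform Y G φ ψ)

/-- An `(X,Y)`-extension is *3-compatible* if for every cubic graph `G` with a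
3-decomposition, every extension `H = G[X → Y]` of `G` also has a 3-decomposition. -/
def ThreeCompatible {I J O : Type*} (X : SimpleGraph (I ⊕ O)) (Y : SimpleGraph (J ⊕ O)) : Prop :=
  ∀ (V W : Type) (G : SimpleGraph V) (H : SimpleGraph W), Finite V → Finite W →
    IsCubic G → HasThreeDecomposition G → IsTransformationOf X Y G H →
    HasThreeDecomposition H

/-! ### Concrete template graphs -/

/-- Template graph of the single vertex `K₁` with outer vertices `O`. -/
def starT (O : Type*) : SimpleGraph (Fin 1 ⊕ O) :=
  SimpleGraph.fromRel fun a b =>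
    match a, b with
    | Sum.inl _, Sum.inr _ => True
    | _, _ => False

/-- Template graph of the triangle: outer vertex `o` is attached to the inner vertex `o`. -/
def triangleT : SimpleGraph (Fin 3 ⊕ Fin 3) :=
  SimpleGraph.fromRel fun a b =>
    match a, b with
    | Sum.inl i, Sum.inl j => i ≠ j
    | Sum.inl i, Sum.inr o => i = o
    | _, _ => False

/-- Template graph of the `K₂,₃`: the outer vertices are attached to the three
degree-2 vertices of the `K₂,₃`. -/
def k23T : SimpleGraph ((Fin 2 ⊕ Fin 3) ⊕ Fin 3) :=
  SimpleGraph.fromRel fun a b =>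
    match a, b with
    | Sum.inl (Sum.inl _), Sum.inl (Sum.inr _) => True
    | Sum.inl (Sum.inr i), Sum.inr o => i = o
    | _, _ => False

/-- Template graph of the Petersen graph minus a vertex: the outer vertices are attached to
its three degree-2 vertices. -/
def petersenMinusVertexT : SimpleGraph ({v : Fin 5 ⊕ Fin 5 // v ≠ Sum.inl 0} ⊕ Fin 3) :=
  SimpleGraph.fromRel fun a b =>
    match a, b with
    | Sum.inl v, Sum.inl w => petersen.Adj v.1 w.1
    | Sum.inl v, Sum.inr o =>
        (o = 0 ∧ v.1 = Sum.inl 1) ∨ (o = 1 ∧ v.1 = Sum.inl 4) ∨ (o = 2 ∧ v.1 = Sum.inr 0)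
    | _, _ => False

/-- Template graph of an edge `u1u2` with four outer vertices: outer vertices `0, 1` are
attached to `u1 ~ inl 0` and outer vertices `2, 3` are attached to `u2 ~ inl 1`. -/
def edgeT : SimpleGraph (Fin 2 ⊕ Fin 4) :=
  SimpleGraph.fromRel fun a b =>
    match a, b with
    | Sum.inl i, Sum.inl j => i ≠ j
    | Sum.inl i, Sum.inr o => (i = 0 ∧ (o = 0 ∨ o = 1)) ∨ (i = 1 ∧ (o = 2 ∨ o = 3))
    | _, _ => False

/-- Template graph of the domino matching `edgeT`: outer vertices `0, 1` are attached to
`d1 ~ 0` and `d3 ~ 2`, outer vertices `2, 3` to `d2 ~ 1` and `d4 ~ 3`. -/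
def dominoT : SimpleGraph (Fin 6 ⊕ Fin 4) :=
  SimpleGraph.fromRel fun a b =>
    match a, b with
    | Sum.inl i, Sum.inl j => domino.Adj i j
    | Sum.inl i, Sum.inr o =>
        (i = 0 ∧ o = 0) ∨ (i = 2 ∧ o = 1) ∨ (i = 1 ∧ o = 2) ∨ (i = 3 ∧ o = 3)
    | _, _ => False

/-- Template graph of the square (the 4-cycle `u1u2u4u3u1 ~ 0,1,3,2`): outer vertex `i` is
attached to the vertex `i`. -/
def squareT : SimpleGraph (Fin 4 ⊕ Fin 4) :=
  SimpleGraph.fromRel fun a b =>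
    match a, b with
    | Sum.inl i, Sum.inl j =>
        (i = 0 ∧ j = 1) ∨ (i = 1 ∧ j = 3) ∨ (i = 3 ∧ j = 2) ∨ (i = 2 ∧ j = 0)
    | Sum.inl i, Sum.inr o => i = o
    | _, _ => False

/-- Template graph of the claw-square: its degree-2 vertices `l1, l2, l3, w4 ~ 5, 6, 7, 3`
are attached to the outer vertices `0, 1, 2, 3` respectively. -/
def clawSquareT : SimpleGraph (Fin 8 ⊕ Fin 4) :=
  SimpleGraph.fromRel fun a b =>
    match a, b with
    | Sum.inl i, Sum.inl j => clawSquare.Adj i j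
    | Sum.inl i, Sum.inr o =>
        (i = 5 ∧ o = 0) ∨ (i = 6 ∧ o = 1) ∨ (i = 7 ∧ o = 2) ∨ (i = 3 ∧ o = 3)
    | _, _ => False

/-- Template graph of the twin-house: its degree-2 vertices `u1, …, u4 ~ 0, …, 3` are
attached to the outer vertices `0, …, 3` respectively. -/
def twinHouseT : SimpleGraph (Fin 6 ⊕ Fin 4) :=
  SimpleGraph.fromRel fun a b =>
    match a, b with
    | Sum.inl i, Sum.inl j => twinHouse.Adj i j
    | Sum.inl i, Sum.inr o => i.val = o.val
    | _, _ => False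

/-- Template graph of the domino: its degree-2 vertices `u1, …, u4 ~ 0, …, 3` are attached
to the outer vertices `0, …, 3` respectively. -/
def dominoT4 : SimpleGraph (Fin 6 ⊕ Fin 4) :=
  SimpleGraph.fromRel fun a b =>
    match a, b with
    | Sum.inl i, Sum.inl j => domino.Adj i j
    | Sum.inl i, Sum.inr o => i.val = o.val
    | _, _ => False

/-- Template graph of a single edge `u1u2` with four outer vertices: the new `u1 ~ inl 0`
is attached to the outer vertices `0, 2` (formerly at `u1` and `u3` of the square) and the
new `u2 ~ inl 1` to the outer vertices `1, 3`. -/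
def edgeT4 : SimpleGraph (Fin 2 ⊕ Fin 4) :=
  SimpleGraph.fromRel fun a b =>
    match a, b with
    | Sum.inl i, Sum.inl j => i ≠ j
    | Sum.inl i, Sum.inr o => (i = 0 ∧ (o = 0 ∨ o = 2)) ∨ (i = 1 ∧ (o = 1 ∨ o = 3))
    | _, _ => False
/-! ### Tutte- and diamond-extensions -/

/-- The graph obtained from `G` by subdividing the edges `ab` and `cd` (with subdivision
vertices `inr 0` and `inr 1`) and joining the two subdivision vertices by a new edge. -/
def tutteGraph {V : Type*} (G : SimpleGraph V) (a b c d : V) : SimpleGraph (V ⊕ Fin 2) :=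
  SimpleGraph.fromEdgeSet
    (((Sym2.map (Sum.inl : V → V ⊕ Fin 2) '' G.edgeSet) \
        {s(Sum.inl a, Sum.inl b), s(Sum.inl c, Sum.inl d)}) ∪
      {s(Sum.inl a, Sum.inr 0), s(Sum.inr 0, Sum.inl b),
       s(Sum.inl c, Sum.inr 1), s(Sum.inr 1, Sum.inl d),
       s(Sum.inr 0, Sum.inr 1)})

/-- The green (tree) part after a Tutte-extension: the four half-edges obtained by
subdividing the two green edges `ab` and `cd` are green, the new edge joining the two
subdivision vertices is black. -/
def tutteTree {V : Type*} (T : SimpleGraph V) (a b c d : V) : SimpleGraph (V ⊕ Fin 2) :=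
  SimpleGraph.fromEdgeSet
    (((Sym2.map (Sum.inl : V → V ⊕ Fin 2) '' T.edgeSet) \
        {s(Sum.inl a, Sum.inl b), s(Sum.inl c, Sum.inl d)}) ∪
      {s(Sum.inl a, Sum.inr 0), s(Sum.inr 0, Sum.inl b),
       s(Sum.inl c, Sum.inr 1), s(Sum.inr 1, Sum.inl d)})

/-- The graph obtained from `G` by a diamond-extension at the edge `xy`: remove `xy`,
add a diamond (a `K₄` minus the edge between its degree-2 vertices `inr 0` and `inr 3`)
and join `inr 0` to `x` and `inr 3` to `y`. -/
def diamondGraph {V : Type*} (G : SimpleGraph V) (x y : V) : SimpleGraph (V ⊕ Fin 4) :=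
  SimpleGraph.fromEdgeSet
    (((Sym2.map (Sum.inl : V → V ⊕ Fin 4) '' G.edgeSet) \ {s(Sum.inl x, Sum.inl y)}) ∪
      {s(Sum.inl x, Sum.inr 0), s(Sum.inr 3, Sum.inl y),
       s(Sum.inr 0, Sum.inr 1), s(Sum.inr 1, Sum.inr 2), s(Sum.inr 2, Sum.inr 3),
       s(Sum.inr 0, Sum.inr 2), s(Sum.inr 1, Sum.inr 3)})

/-- The green (tree) part after a diamond-extension at the green edge `xy`: the edges
joining the diamond to `x` and `y` and a path of three diamond edges joining the two
degree-2 vertices of the diamond are green; the two remaining (non-incident) diamond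
edges are black. -/
def diamondTree {V : Type*} (T : SimpleGraph V) (x y : V) : SimpleGraph (V ⊕ Fin 4) :=
  SimpleGraph.fromEdgeSet
    (((Sym2.map (Sum.inl : V → V ⊕ Fin 4) '' T.edgeSet) \ {s(Sum.inl x, Sum.inl y)}) ∪
      {s(Sum.inl x, Sum.inr 0), s(Sum.inr 3, Sum.inl y),
       s(Sum.inr 0, Sum.inr 1), s(Sum.inr 1, Sum.inr 2), s(Sum.inr 2, Sum.inr 3)})

/-- `(G, T)` is isomorphic, as a graph with a distinguished (green) subgraph,
to `(G', T')`. -/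
def PairIso {V W : Type*} (G T : SimpleGraph V) (G' T' : SimpleGraph W) : Prop :=
  ∃ e : G ≃g G', ∀ u v : V, T.Adj u v ↔ T'.Adj (e u) (e v)

/-- `(G, T)` is obtained from `(G', T')` by a Tutte-extension (the two subdivided green
edges may be incident or non-incident, but must be distinct). -/
def TutteExtensionOf {V W : Type*} (G' T' : SimpleGraph V) (G T : SimpleGraph W) : Prop :=
  ∃ a b c d : V, T'.Adj a b ∧ T'.Adj c d ∧ s(a, b) ≠ s(c, d) ∧
    PairIso (tutteGraph G' a b c d) (tutteTree T' a b c d) G T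

/-- `(G, T)` is obtained from `(G', T')` by a diamond-extension. -/
def DiamondExtensionOf {V W : Type*} (G' T' : SimpleGraph V) (G T : SimpleGraph W) : Prop :=
  ∃ x y : V, T'.Adj x y ∧ PairIso (diamondGraph G' x y) (diamondTree T' x y) G T

/-- `(G, T)` is obtained from `(G', T')` by a Tutte- or a diamond-extension. -/
def ExtensionOf {V W : Type*} (G' T' : SimpleGraph V) (G T : SimpleGraph W) : Prop :=
  TutteExtensionOf G' T' G T ∨ DiamondExtensionOf G' T' G T

/-- As `PairIso`, additionally preserving a second distinguished subgraph. -/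
def TripleIso {V W : Type*} (G T C : SimpleGraph V) (G' T' C' : SimpleGraph W) : Prop :=
  ∃ e : G ≃g G', (∀ u v : V, T.Adj u v ↔ T'.Adj (e u) (e v)) ∧
    (∀ u v : V, C.Adj u v ↔ C'.Adj (e u) (e v))

/-- `(G, T, C)` is obtained from `(G', T', C')` by a Tutte- or diamond-extension; the
2-regular part `C` is untouched by the extension. -/
def ExtensionOfWithC {V W : Type*} (G' T' C' : SimpleGraph V) (G T C : SimpleGraph W) : Prop :=
  (∃ a b c d : V, T'.Adj a b ∧ T'.Adj c d ∧ s(a, b) ≠ s(c, d) ∧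
     TripleIso (tutteGraph G' a b c d) (tutteTree T' a b c d)
       (SimpleGraph.map (Function.Embedding.inl : V ↪ V ⊕ Fin 2) C') G T C) ∨
  (∃ x y : V, T'.Adj x y ∧
     TripleIso (diamondGraph G' x y) (diamondTree T' x y)
       (SimpleGraph.map (Function.Embedding.inl : V ↪ V ⊕ Fin 4) C') G T C)

/-- A graph together with a 3-decomposition `(T, C, M)`. -/
def DecompState : Type 1 :=
  Σ V : Type, SimpleGraph V × SimpleGraph V × SimpleGraph V × SimpleGraph V

/-- `ReduceStep s t` holds if the decomposed graph `t` is obtained from `s` by a single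
Tutte- or diamond-reduction, i.e. `s` is obtained from the 3-decomposed cubic graph `t`
by a Tutte- or diamond-extension. -/
def ReduceStep (s t : DecompState) : Prop :=
  IsCubic t.2.1 ∧ IsThreeDecomposition t.2.1 t.2.2.1 t.2.2.2.1 t.2.2.2.2 ∧
  ExtensionOfWithC t.2.1 t.2.2.1 t.2.2.2.1 s.2.1 s.2.2.1 s.2.2.2.1

/-- A graph together with a distinguished (green) spanning tree. -/
def PairState : Type 1 := Σ V : Type, SimpleGraph V × SimpleGraph V

/-- One Tutte- or diamond-extension step on graphs with a green spanning tree. -/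
def ExtendStep (s t : PairState) : Prop := ExtensionOf s.2.1 s.2.2 t.2.1 t.2.2

/-! ### Tree-width and path-width -/

/-- `G` has a tree-decomposition of width at most `w`. -/
def HasTreewidthAtMost {V : Type*} (G : SimpleGraph V) (w : ℕ) : Prop :=
  ∃ (ι : Type) (t : SimpleGraph ι) (bag : ι → Set V),
    t.IsTree ∧
    (∀ v : V, ∃ i, v ∈ bag i) ∧
    (∀ u v : V, G.Adj u v → ∃ i, u ∈ bag i ∧ v ∈ bag i) ∧
    (∀ v : V, (SimpleGraph.induce {i : ι | v ∈ bag i} t).Connected) ∧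
    (∀ i : ι, (bag i).ncard ≤ w + 1)

/-- `G` has a path-decomposition of width at most `w`. -/
def HasPathwidthAtMost {V : Type*} (G : SimpleGraph V) (w : ℕ) : Prop :=
  ∃ (n : ℕ) (bag : Fin n → Set V),
    (∀ v : V, ∃ i, v ∈ bag i) ∧
    (∀ u v : V, G.Adj u v → ∃ i, u ∈ bag i ∧ v ∈ bag i) ∧
    (∀ (v : V) (i j k : Fin n), i ≤ j → j ≤ k → v ∈ bag i → v ∈ bag k → v ∈ bag j) ∧
    (∀ i, (bag i).ncard ≤ w + 1)

/-- The path on six vertices. -/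
def pathSix : SimpleGraph (Fin 6) :=
  SimpleGraph.fromRel fun i j => j.val = i.val + 1

/-- The edges of `G` outside of the spanning tree `T` decompose into a disjoint union of
cycles (a 2-regular graph) and a matching. -/
def ComplementDecomposes {V : Type*} (G T : SimpleGraph V) : Prop :=
  ∃ C M : SimpleGraph V,
    C.edgeSet ∪ M.edgeSet = G.edgeSet \ T.edgeSet ∧
    Disjoint C.edgeSet M.edgeSet ∧
    (∀ a : V, (C.neighborSet a).ncard = 0 ∨ (C.neighborSet a).ncard = 2) ∧
    (∀ a : V, (M.neighborSet a).ncard ≤ 1)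

/-! In both extensions the black graph `G − E(T)` is the black graph of `G'`, carried over to
the old vertices, together with a matching on the new vertices: the new edge of a
Tutte-extension, resp. the two non-incident black edges of the diamond. No new black edge
meets an old vertex, so old vertices keep their black neighbourhoods. Hence a split of the new
black graph into cycles and a matching restricts to the old vertices, and conversely a split of
the old one extends by adding the new edges to the matching part. -/

open Function (Embedding)

def SplitsIntoCyclesAndMatching {V : Type*} (B : SimpleGraph V) : Prop :=
  ∃ C M : SimpleGraph V, C ⊔ M = B ∧ Disjoint C M ∧
    (∀ a : V, (C.neighborSet a).ncard = 0 ∨ (C.neighborSet a).ncard = 2) ∧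
    (∀ a : V, (M.neighborSet a).ncard ≤ 1)

theorem complementDecomposes_iff {V : Type*} (G T : SimpleGraph V) :
    ComplementDecomposes G T ↔ SplitsIntoCyclesAndMatching (G \ T) := by
  simp only [ComplementDecomposes, SplitsIntoCyclesAndMatching, ← edgeSet_sup, ← edgeSet_sdiff,
    edgeSet_inj, disjoint_edgeSet]

namespace SimpleGraph

variable {V W : Type*} (f : V ↪ W)

theorem map_sup (G H : SimpleGraph V) : (G ⊔ H).map f = G.map f ⊔ H.map f :=
  GaloisConnection.l_sup (map_le_iff_le_comap f)

theorem comap_sup (G H : SimpleGraph W) : (G ⊔ H).comap f = G.comap f ⊔ H.comap f := rfl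

theorem image_sym2Map_inl_edgeSet {X : Type*} (G : SimpleGraph V) :
    Sym2.map (Sum.inl : V → V ⊕ X) '' G.edgeSet = (G.map Embedding.inl).edgeSet :=
  (edgeSet_map .inl G).symm

theorem neighborSet_map_of_notMem_range (G : SimpleGraph V) {w : W} (hw : w ∉ Set.range f) :
    (G.map f).neighborSet w = ∅ := by
  ext x
  simp only [mem_neighborSet, map_adj, Set.mem_empty_iff_false, iff_false, not_exists]
  rintro u v ⟨-, rfl, -⟩
  exact hw ⟨u, rfl⟩

theorem Iso.sdiff_eq_map {G T : SimpleGraph V} {G₂ T₂ : SimpleGraph W} (e : G ≃g G₂)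
    (hT : ∀ u v, T.Adj u v ↔ T₂.Adj (e u) (e v)) :
    G₂ \ T₂ = (G \ T).map e.toEquiv.toEmbedding := by
  ext x y
  obtain ⟨u, rfl⟩ := e.surjective x
  obtain ⟨v, rfl⟩ := e.surjective y
  have hmap := map_adj_apply (G := G \ T) (f := e.toEquiv.toEmbedding) (a := u) (b := v)
  refine Iff.trans ?_ hmap.symm
  rw [sdiff_adj, sdiff_adj, e.map_adj_iff, hT]

end SimpleGraph

structure IsFreshMatching {V W : Type*} (f : V ↪ W) (N : SimpleGraph W) : Prop where
  not_adj_apply : ∀ v w, ¬ N.Adj (f v) w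
  subsingleton_neighborSet : ∀ w, (N.neighborSet w).Subsingleton

namespace IsFreshMatching

variable {V W : Type*} {f : V ↪ W} {N : SimpleGraph W}

theorem bot (f : V ↪ W) : IsFreshMatching f ⊥ :=
  ⟨fun _ _ => id, fun _ => by simp⟩

theorem ncard_neighborSet_le_one (hN : IsFreshMatching f N) (w : W) :
    (N.neighborSet w).ncard ≤ 1 :=
  (Set.ncard_le_one (hN.subsingleton_neighborSet w).finite).mpr
    fun _ ha _ hb => hN.subsingleton_neighborSet w ha hb

theorem comap_eq_bot (hN : IsFreshMatching f N) : N.comap f = ⊥ := by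
  ext u v
  exact iff_of_false (hN.not_adj_apply u (f v)) id

variable (G : SimpleGraph V)

theorem neighborSet_map_sup_apply (hN : IsFreshMatching f N) (u : V) :
    (G.map f ⊔ N).neighborSet (f u) = f '' G.neighborSet u := by
  have hempty : N.neighborSet (f u) = ∅ :=
    Set.eq_empty_of_forall_notMem fun w => hN.not_adj_apply u w
  rw [neighborSet_sup, neighborSet_map, hempty, Set.union_empty]

theorem neighborSet_map_sup_of_notMem_range {w : W} (hw : w ∉ Set.range f) :
    (G.map f ⊔ N).neighborSet w = N.neighborSet w := by
  rw [neighborSet_sup, neighborSet_map_of_notMem_range f G hw, Set.empty_union]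

theorem ncard_neighborSet_comap (hN : IsFreshMatching f N) {H : SimpleGraph W}
    (hH : H ≤ G.map f ⊔ N) (u : V) :
    ((H.comap f).neighborSet u).ncard = (H.neighborSet (f u)).ncard := by
  refine Set.ncard_preimage_of_injective_subset_range f.injective ?_
  calc H.neighborSet (f u) ⊆ (G.map f ⊔ N).neighborSet (f u) := fun _ hw => hH hw
    _ = f '' G.neighborSet u := neighborSet_map_sup_apply G hN u
    _ ⊆ Set.range f := Set.image_subset_range f _

end IsFreshMatching

namespace SplitsIntoCyclesAndMatching

variable {V W : Type*} {f : V ↪ W} {N : SimpleGraph W} {G : SimpleGraph V}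

theorem map_sup (hN : IsFreshMatching f N) (hG : SplitsIntoCyclesAndMatching G) :
    SplitsIntoCyclesAndMatching (G.map f ⊔ N) := by
  obtain ⟨C, M, rfl, hCM, hC, hM⟩ := hG
  refine ⟨C.map f, M.map f ⊔ N, by rw [SimpleGraph.map_sup, sup_assoc], ?_, ?_, ?_⟩
  · rw [disjoint_sup_right, disjoint_left, disjoint_left]
    constructor
    · rintro _ _ ⟨-, u, v, huv, rfl, rfl⟩ h
      exact disjoint_left.mp hCM u v huv (map_adj_apply.mp h)
    · rintro _ _ ⟨-, u, v, -, rfl, rfl⟩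
      exact hN.not_adj_apply u _
  · intro w
    by_cases hw : w ∈ Set.range f
    · obtain ⟨u, rfl⟩ := hw
      rw [neighborSet_map, Set.ncard_image_of_injective _ f.injective]
      exact hC u
    · left
      rw [neighborSet_map_of_notMem_range f C hw, Set.ncard_empty]
  · intro w
    by_cases hw : w ∈ Set.range f
    · obtain ⟨u, rfl⟩ := hw
      rw [hN.neighborSet_map_sup_apply, Set.ncard_image_of_injective _ f.injective]
      exact hM u
    · rw [IsFreshMatching.neighborSet_map_sup_of_notMem_range M hw]
      exact hN.ncard_neighborSet_le_one w

theorem of_map_sup (hN : IsFreshMatching f N) (h : SplitsIntoCyclesAndMatching (G.map f ⊔ N)) :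
    SplitsIntoCyclesAndMatching G := by
  obtain ⟨C, M, hCM, hdisj, hC, hM⟩ := h
  have hCle : C ≤ G.map f ⊔ N := hCM ▸ le_sup_left
  have hMle : M ≤ G.map f ⊔ N := hCM ▸ le_sup_right
  refine ⟨C.comap f, M.comap f, ?_, ?_, ?_, ?_⟩
  · rw [← comap_sup, hCM, comap_sup, comap_map_eq, hN.comap_eq_bot, sup_bot_eq]
  · exact disjoint_left.mpr fun u v => disjoint_left.mp hdisj (f u) (f v)
  · intro u
    rw [hN.ncard_neighborSet_comap G hCle]
    exact hC (f u)
  · intro u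
    rw [hN.ncard_neighborSet_comap G hMle]
    exact hM (f u)

end SplitsIntoCyclesAndMatching

theorem splitsIntoCyclesAndMatching_map_sup_iff {V W : Type*} {f : V ↪ W} {N : SimpleGraph W}
    (hN : IsFreshMatching f N) (G : SimpleGraph V) :
    SplitsIntoCyclesAndMatching (G.map f ⊔ N) ↔ SplitsIntoCyclesAndMatching G :=
  ⟨.of_map_sup hN, .map_sup hN⟩

theorem splitsIntoCyclesAndMatching_map_iff {V W : Type*} (f : V ↪ W) (G : SimpleGraph V) :
    SplitsIntoCyclesAndMatching (G.map f) ↔ SplitsIntoCyclesAndMatching G := by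
  simpa using splitsIntoCyclesAndMatching_map_sup_iff (IsFreshMatching.bot f) G

section Extensions

variable {V : Type*}

theorem tutteGraph_sdiff_tutteTree (G' T' : SimpleGraph V) {a b c d : V} (hab : T'.Adj a b)
    (hcd : T'.Adj c d) :
    tutteGraph G' a b c d \ tutteTree T' a b c d =
      (G' \ T').map Embedding.inl ⊔ edge (.inr 0) (.inr 1) := by
  ext x y
  rcases x with u | i <;> rcases y with v | j <;>
    simp [tutteGraph, tutteTree, edge_adj, image_sym2Map_inl_edgeSet]
  · grind [SimpleGraph.Adj.symm, SimpleGraph.Adj.ne]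
  all_goals grind

theorem diamondGraph_sdiff_diamondTree (G' T' : SimpleGraph V) {x y : V} (hxy : T'.Adj x y) :
    diamondGraph G' x y \ diamondTree T' x y =
      (G' \ T').map Embedding.inl ⊔ (edge (.inr 0) (.inr 2) ⊔ edge (.inr 1) (.inr 3)) := by
  ext u v
  rcases u with u | i <;> rcases v with v | j <;>
    simp [diamondGraph, diamondTree, edge_adj, image_sym2Map_inl_edgeSet]
  · grind [SimpleGraph.Adj.symm, SimpleGraph.Adj.ne]
  · grind
  · grind
  · revert i j
    decide

theorem isFreshMatching_tutte :
    IsFreshMatching Embedding.inl (edge (.inr 0) (.inr 1) : SimpleGraph (V ⊕ Fin 2)) := by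
  refine ⟨fun v w => by simp [edge_adj], fun w x hx y hy => ?_⟩
  simp only [mem_neighborSet, edge_adj] at hx hy
  grind

theorem isFreshMatching_diamond :
    IsFreshMatching Embedding.inl
      (edge (.inr 0) (.inr 2) ⊔ edge (.inr 1) (.inr 3) : SimpleGraph (V ⊕ Fin 4)) := by
  refine ⟨fun v w => by simp [edge_adj], fun w x hx y hy => ?_⟩
  simp only [mem_neighborSet, sup_adj, edge_adj] at hx hy
  grind

end Extensions

theorem extension_preserves_three_dec_general {V W : Type}
    (G' T' : SimpleGraph V) (G T : SimpleGraph W)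
    (hext : ExtensionOf G' T' G T) :
    ComplementDecomposes G T ↔ ComplementDecomposes G' T' := by
  rw [complementDecomposes_iff, complementDecomposes_iff]
  rcases hext with ⟨a, b, c, d, hab, hcd, -, e, he⟩ | ⟨x, y, hxy, e, he⟩
  · rw [e.sdiff_eq_map he, splitsIntoCyclesAndMatching_map_iff,
      tutteGraph_sdiff_tutteTree G' T' hab hcd,
      splitsIntoCyclesAndMatching_map_sup_iff isFreshMatching_tutte]
  · rw [e.sdiff_eq_map he, splitsIntoCyclesAndMatching_map_iff,
      diamondGraph_sdiff_diamondTree G' T' hxy,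
      splitsIntoCyclesAndMatching_map_sup_iff isFreshMatching_diamond]

/-- If `(G, T)` is obtained from `(G', T')` (a graph with a green spanning
tree) by a Tutte- or diamond-extension, then `G − E(T)` decomposes into a disjoint union of
cycles and a matching iff `G' − E(T')` does. -/
theorem extension_preserves_three_dec {V W : Type} [Finite V] [Finite W]
    (G' T' : SimpleGraph V) (G T : SimpleGraph W)
    (hle : T' ≤ G') (htree : T'.IsTree)
    (hext : ExtensionOf G' T' G T) :
    ComplementDecomposes G T ↔ ComplementDecomposes G' T' :=
  extension_preserves_three_dec_general G' T' G T hext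
end

section
/- The extension replacing a single vertex by a triangle is 3-compatible: if G is a cubic graph with a 3-decomposition, u is a vertex of G, and H is obtained from G by deleting u, adding a triangle u1u2u3, and joining u1, u2, u3 to the three former neighbours of u (one each), then H has a 3-decomposition. -/
open SimpleGraph

/-!
Let `(T, C, M)` be a 3-decomposition of `G` and let the triangle replace `u`. Each edge from the
triangle to a former neighbour of `u` takes the colour of the corresponding edge at `u`; the
triangle itself is split into a path `P`, added to `T`, and its third edge, added to `C` or to `M`.
Old vertices keep their degree in every colour. The new `T` is connected because `P` is, and it
gains as many edges as vertices, so it is again a spanning tree. As `u` has `C`-degree `0` or `2`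
and `M`-degree at most `1`, the middle vertex of `P` can be chosen not to be attached by a
`C`-edge, with both ends attached by `C`-edges (the third edge then closes a cycle of `C`) or both
by `T`-edges (the third edge then goes to `M`).
-/

open Sum Function

namespace SimpleGraph

variable {V J : Type*}

/-- `G` with the vertex `u` replaced by a copy of `Y`; the vertex `j` of the copy takes over the
edge from `u` to `ψ j`, if there is one. -/
def vertexBlowup (G : SimpleGraph V) (u : V) (ψ : J → V) (Y : SimpleGraph J) :
    SimpleGraph ({a // a ≠ u} ⊕ J) where
  Adj
    | inl a, inl b => G.Adj a b
    | inl a, inr j | inr j, inl a => ψ j = a ∧ G.Adj u a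
    | inr j, inr k => Y.Adj j k
  symm := ⟨by
    rintro (a | j) (b | k) h
    exacts [h.symm, h, h, h.symm]⟩
  loopless := ⟨by
    rintro (a | j) h
    exacts [G.loopless.irrefl a h, Y.loopless.irrefl j h]⟩

variable {G G₁ G₂ : SimpleGraph V} {Y Y₁ Y₂ : SimpleGraph J} {u : V} {ψ : J → V}

@[simp] lemma vertexBlowup_adj_inl_inl {a b : {a // a ≠ u}} :
    (vertexBlowup G u ψ Y).Adj (inl a) (inl b) ↔ G.Adj a b := Iff.rfl

@[simp] lemma vertexBlowup_adj_inl_inr {a : {a // a ≠ u}} {j : J} :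
    (vertexBlowup G u ψ Y).Adj (inl a) (inr j) ↔ ψ j = a ∧ G.Adj u a := Iff.rfl

@[simp] lemma vertexBlowup_adj_inr_inl {a : {a // a ≠ u}} {j : J} :
    (vertexBlowup G u ψ Y).Adj (inr j) (inl a) ↔ ψ j = a ∧ G.Adj u a := Iff.rfl

@[simp] lemma vertexBlowup_adj_inr_inr {j k : J} :
    (vertexBlowup G u ψ Y).Adj (inr j) (inr k) ↔ Y.Adj j k := Iff.rfl

lemma vertexBlowup_sup :
    vertexBlowup (G₁ ⊔ G₂) u ψ (Y₁ ⊔ Y₂) = vertexBlowup G₁ u ψ Y₁ ⊔ vertexBlowup G₂ u ψ Y₂ := by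
  ext (a | j) (b | k) <;> simp [and_or_left]

lemma disjoint_vertexBlowup (hG : Disjoint G₁ G₂) (hY : Disjoint Y₁ Y₂) :
    Disjoint (vertexBlowup G₁ u ψ Y₁) (vertexBlowup G₂ u ψ Y₂) := by
  rw [disjoint_left] at hG hY ⊢
  rintro (a | j) (b | k) h h'
  exacts [hG _ _ h h', hG _ _ h.2 h'.2, hG _ _ h.2 h'.2, hY _ _ h h']

lemma vertexBlowup_bot_left : vertexBlowup ⊥ u ψ Y = Y.map Embedding.inr := by
  ext (a | j) (b | k) <;> simp

lemma ncard_neighborSet_eq_ncard_setOf_adj (hψ : Injective ψ)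
    (hu : G.neighborSet u ⊆ Set.range ψ) :
    (G.neighborSet u).ncard = {j | G.Adj u (ψ j)}.ncard := by
  have : G.neighborSet u = ψ '' {j | G.Adj u (ψ j)} := by
    ext v
    refine ⟨fun h => ?_, ?_⟩
    · obtain ⟨j, rfl⟩ := hu h
      exact ⟨j, h, rfl⟩
    · rintro ⟨j, h, rfl⟩
      exact h
  rw [this, Set.ncard_image_of_injective _ hψ]

lemma ncard_neighborSet_vertexBlowup_inl (hψ : Injective ψ)
    (hu : G.neighborSet u ⊆ Set.range ψ) (a : {a // a ≠ u}) :
    ((vertexBlowup G u ψ Y).neighborSet (inl a)).ncard = (G.neighborSet a).ncard := by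
  set g : {a // a ≠ u} ⊕ J → V := Sum.elim Subtype.val fun _ => u
  have hinj : Set.InjOn g ((vertexBlowup G u ψ Y).neighborSet (inl a)) := by
    rintro (b | j) hb (c | k) hc h
    · exact congrArg inl (Subtype.ext h)
    · exact absurd h b.2
    · exact absurd h.symm c.2
    · exact congrArg inr (hψ (hb.1.trans hc.1.symm))
  have himage : g '' (vertexBlowup G u ψ Y).neighborSet (inl a) = G.neighborSet a := by
    ext v
    refine ⟨?_, fun h => ?_⟩
    · rintro ⟨b | j, h, rfl⟩
      exacts [h, h.2.symm]
    · by_cases hv : v = u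
      · subst hv
        obtain ⟨j, hj⟩ := hu h.symm
        exact ⟨inr j, ⟨hj, h.symm⟩, rfl⟩
      · exact ⟨inl ⟨v, hv⟩, h, rfl⟩
  rw [← himage, hinj.ncard_image]

lemma ncard_neighborSet_vertexBlowup_inr_of_adj [Finite J] {j : J} (h : G.Adj u (ψ j)) :
    ((vertexBlowup G u ψ Y).neighborSet (inr j)).ncard = (Y.neighborSet j).ncard + 1 := by
  have : (vertexBlowup G u ψ Y).neighborSet (inr j) =
      insert (inl ⟨ψ j, h.ne.symm⟩) (inr '' Y.neighborSet j) := by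
    ext (a | k)
    · simp only [mem_neighborSet, vertexBlowup_adj_inr_inl, Set.mem_insert_iff, inl.injEq,
        Subtype.ext_iff, Set.mem_image, reduceCtorEq, and_false, exists_false, or_false]
      exact ⟨fun h' => h'.1.symm, fun h' => ⟨h'.symm, h' ▸ h⟩⟩
    · simp
  rw [this, Set.ncard_insert_of_notMem (by simp), Set.ncard_image_of_injective _ inr_injective]

lemma ncard_neighborSet_vertexBlowup_inr_of_not_adj {j : J} (h : ¬ G.Adj u (ψ j)) :
    ((vertexBlowup G u ψ Y).neighborSet (inr j)).ncard = (Y.neighborSet j).ncard := by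
  have : (vertexBlowup G u ψ Y).neighborSet (inr j) = inr '' Y.neighborSet j := by
    ext (a | k)
    · simp only [mem_neighborSet, vertexBlowup_adj_inr_inl, Set.mem_image, reduceCtorEq,
        and_false, exists_false, iff_false]
      rintro ⟨hja, h'⟩
      exact h (hja ▸ h')
    · simp
  rw [this, Set.ncard_image_of_injective _ inr_injective]

lemma Connected.vertexBlowup (hG : G.Connected) (hY : Y.Connected)
    (hu : G.neighborSet u ⊆ Set.range ψ) : (G.vertexBlowup u ψ Y).Connected := by
  set B := G.vertexBlowup u ψ Y
  have hcopy : ∀ j k, B.Reachable (inr j) (inr k) := fun j k =>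
    (hY.preconnected j k).map ⟨inr, fun h => h⟩
  have hwalk : ∀ {v w} (p : G.Walk v w) (hv : v ≠ u), w = u →
      ∃ j, B.Reachable (inl ⟨v, hv⟩) (inr j) := by
    intro v w p
    induction p with
    | nil => exact fun hv hw => absurd hw hv
    | @cons v c w h p ih =>
      intro hv hw
      by_cases hc : c = u
      · subst hc
        obtain ⟨j, hj⟩ := hu h.symm
        exact ⟨j, Adj.reachable (v := inr j) ⟨hj, h.symm⟩⟩
      · obtain ⟨j, hj⟩ := ih hc hw
        exact ⟨j, (Adj.reachable (v := inl ⟨c, hc⟩) h).trans hj⟩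
  obtain ⟨j₀⟩ := hY.nonempty
  rw [connected_iff_exists_forall_reachable]
  refine ⟨inr j₀, ?_⟩
  rintro (a | k)
  · obtain ⟨j, hj⟩ := hwalk (hG.preconnected a u).some a.2 rfl
    exact (hcopy j₀ j).trans hj.symm
  · exact hcopy j₀ k

lemma ncard_edgeSet_vertexBlowup_bot (hψ : Injective ψ) (hu : G.neighborSet u ⊆ Set.range ψ) :
    (vertexBlowup G u ψ (⊥ : SimpleGraph J)).edgeSet.ncard = G.edgeSet.ncard := by
  set B := vertexBlowup G u ψ (⊥ : SimpleGraph J)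
  set g : {a // a ≠ u} ⊕ J → V := Sum.elim Subtype.val fun _ => u
  have hg : ∀ {x y}, B.Adj x y → G.Adj (g x) (g y) := by
    rintro (a | j) (b | k) h
    exacts [h, h.2.symm, h.2, h.elim]
  -- `g` collapses the copy of `⊥` to `u`, but is injective on edges: the copy carries no edges
  -- and `ψ` is injective.
  have hdet : ∀ {x y x' y'}, B.Adj x y → B.Adj x' y' → g x = g x' → g y = g y' → x = x' := by
    rintro (a | j) (b | k) (a' | j') (b' | k') h h' hx hy <;>
      simp only [g, Sum.elim_inl, Sum.elim_inr] at hx hy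
    all_goals first
      | exact congrArg inl (Subtype.ext hx) | exact absurd hx a.2 | exact absurd hx.symm a'.2
      | exact h.elim | exact h'.elim
      | exact congrArg inr (hψ (h.1.trans (hy.trans h'.1.symm)))
  have hinj : Set.InjOn (Sym2.map g) B.edgeSet := by
    intro e he e' he' h
    induction e with | h x y =>
    induction e' with | h x' y' =>
    rw [Sym2.map_mk, Sym2.map_mk, Sym2.eq_iff] at h
    rw [mem_edgeSet] at he he'
    rcases h with ⟨hx, hy⟩ | ⟨hx, hy⟩
    · rw [hdet he he' hx hy, hdet he.symm he'.symm hy hx]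
    · rw [hdet he he'.symm hx hy, hdet he.symm he' hy hx, Sym2.eq_swap]
  have hmem : ∀ v w, G.Adj v w → (hw : w ≠ u) → s(v, w) ∈ Sym2.map g '' B.edgeSet := by
    intro v w h hw
    by_cases hv : v = u
    · subst hv
      obtain ⟨j, hj⟩ := hu h
      exact ⟨s(inr j, inl ⟨w, hw⟩), ⟨hj, h⟩, rfl⟩
    · exact ⟨s(inl ⟨v, hv⟩, inl ⟨w, hw⟩), h, rfl⟩
  have himage : Sym2.map g '' B.edgeSet = G.edgeSet := by
    refine subset_antisymm ?_ fun e he => ?_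
    · rintro _ ⟨e, he, rfl⟩
      induction e with | h x y => exact hg he
    · induction e with | h v w =>
      by_cases hw : w = u
      · rw [Sym2.eq_swap]
        exact hmem w v he.symm (hw ▸ (G.ne_of_adj he))
      · exact hmem v w he hw
  rw [← himage, hinj.ncard_image]

lemma ncard_edgeSet_vertexBlowup [Finite V] [Finite J] (hψ : Injective ψ)
    (hu : G.neighborSet u ⊆ Set.range ψ) :
    (vertexBlowup G u ψ Y).edgeSet.ncard = G.edgeSet.ncard + Y.edgeSet.ncard := by
  have hsplit : vertexBlowup G u ψ Y = vertexBlowup G u ψ ⊥ ⊔ vertexBlowup ⊥ u ψ Y := by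
    rw [← vertexBlowup_sup, sup_bot_eq, bot_sup_eq]
  rw [hsplit, edgeSet_sup, Set.ncard_union_eq
      (disjoint_edgeSet.2 (disjoint_vertexBlowup disjoint_bot_right disjoint_bot_left)),
    ncard_edgeSet_vertexBlowup_bot hψ hu, vertexBlowup_bot_left, edgeSet_map,
    Set.ncard_image_of_injective _ (Embedding.sym2Map _).injective]

lemma IsTree.vertexBlowup [Finite V] [Finite J] (hG : G.IsTree) (hY : Y.IsTree)
    (hψ : Injective ψ) (hu : G.neighborSet u ⊆ Set.range ψ) :
    (G.vertexBlowup u ψ Y).IsTree := by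
  rw [isTree_iff_connected_and_card] at hG hY ⊢
  refine ⟨hG.1.vertexBlowup hY.1 hu, ?_⟩
  have := hY.1.nonempty
  have hJ : 0 < Nat.card J := Nat.card_pos
  have hV : Nat.card {a // a ≠ u} + 1 = Nat.card V := by
    rw [← Set.ncard_add_ncard_compl {u}, Set.ncard_singleton, add_comm]
    rfl
  rw [Nat.card_coe_set_eq] at hG hY ⊢
  rw [ncard_edgeSet_vertexBlowup hψ hu, Nat.card_sum]
  omega

lemma ncard_neighborSet_vertexBlowup_bot_inr_le_one [Finite J] (j : J) :
    ((G.vertexBlowup u ψ (⊥ : SimpleGraph J)).neighborSet (inr j)).ncard ≤ 1 := by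
  by_cases h : G.Adj u (ψ j)
  · simp [ncard_neighborSet_vertexBlowup_inr_of_adj h]
  · simp [ncard_neighborSet_vertexBlowup_inr_of_not_adj h]

lemma ncard_neighborSet_top_sdiff_starGraph_of_ne {i j : Fin 3} (h : j ≠ i) :
    (((⊤ : SimpleGraph (Fin 3)) \ starGraph i).neighborSet j).ncard = 1 := by
  rw [Set.ncard_eq_toFinset_card']
  revert i j
  decide

end SimpleGraph

section

variable {V J : Type*} {G T C M : SimpleGraph V} {u : V} {ψ : J → V}

lemma isThreeDecomposition_iff :
    IsThreeDecomposition G T C M ↔ T ⊔ C ⊔ M = G ∧ Disjoint T C ∧ Disjoint T M ∧ Disjoint C M ∧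
      T.IsTree ∧ (∀ a, (C.neighborSet a).ncard = 0 ∨ (C.neighborSet a).ncard = 2) ∧
      (∀ a, (M.neighborSet a).ncard ≤ 1) := by
  simp only [IsThreeDecomposition, ← edgeSet_sup, edgeSet_inj, disjoint_edgeSet]

lemma IsThreeDecomposition.vertexBlowup [Finite V] [Finite J] {Y T' C' M' : SimpleGraph J}
    (hdec : IsThreeDecomposition G T C M) (hψ : Injective ψ)
    (hu : G.neighborSet u ⊆ Set.range ψ) (hY : T' ⊔ C' ⊔ M' = Y) (hTC : Disjoint T' C')
    (hTM : Disjoint T' M') (hCM : Disjoint C' M') (hT' : T'.IsTree)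
    (hC' : ∀ j, ((C.vertexBlowup u ψ C').neighborSet (inr j)).ncard = 0 ∨
      ((C.vertexBlowup u ψ C').neighborSet (inr j)).ncard = 2)
    (hM' : ∀ j, ((M.vertexBlowup u ψ M').neighborSet (inr j)).ncard ≤ 1) :
    IsThreeDecomposition (G.vertexBlowup u ψ Y) (T.vertexBlowup u ψ T')
      (C.vertexBlowup u ψ C') (M.vertexBlowup u ψ M') := by
  rw [isThreeDecomposition_iff] at hdec ⊢
  obtain ⟨hsup, hTC₀, hTM₀, hCM₀, htree, hC, hM⟩ := hdec
  have hle : ∀ {A}, A ≤ G → A.neighborSet u ⊆ Set.range ψ := fun hA =>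
    (neighborSet_mono hA u).trans hu
  refine ⟨by rw [← hsup, ← hY, vertexBlowup_sup, vertexBlowup_sup], disjoint_vertexBlowup hTC₀ hTC,
    disjoint_vertexBlowup hTM₀ hTM, disjoint_vertexBlowup hCM₀ hCM,
    htree.vertexBlowup hT' hψ (hle (hsup ▸ le_sup_left.trans le_sup_left)), ?_, ?_⟩
  · rintro (a | j)
    · rw [ncard_neighborSet_vertexBlowup_inl hψ (hle (hsup ▸ le_sup_right.trans le_sup_left))]
      exact hC a
    · exact hC' j
  · rintro (a | j)
    · rw [ncard_neighborSet_vertexBlowup_inl hψ (hle (hsup ▸ le_sup_right))]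
      exact hM a
    · exact hM' j

lemma IsThreeDecomposition.vertexBlowup_top_cycle [Finite V] (hdec : IsThreeDecomposition G T C M)
    {ψ : Fin 3 → V} (hψ : Injective ψ) (hu : G.neighborSet u ⊆ Set.range ψ) {i : Fin 3}
    (hi : ¬ C.Adj u (ψ i)) (hC : ∀ j ≠ i, C.Adj u (ψ j)) :
    IsThreeDecomposition (G.vertexBlowup u ψ ⊤) (T.vertexBlowup u ψ (starGraph i))
      (C.vertexBlowup u ψ (⊤ \ starGraph i)) (M.vertexBlowup u ψ ⊥) := by
  refine hdec.vertexBlowup hψ hu (by rw [sup_bot_eq, sup_sdiff_cancel_right le_top])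
    disjoint_sdiff_self_right disjoint_bot_right disjoint_bot_right (isTree_starGraph i)
    (fun j => ?_) ncard_neighborSet_vertexBlowup_bot_inr_le_one
  by_cases hj : j = i
  · subst hj
    simp [ncard_neighborSet_vertexBlowup_inr_of_not_adj hi]
  · rw [ncard_neighborSet_vertexBlowup_inr_of_adj (hC j hj),
      ncard_neighborSet_top_sdiff_starGraph_of_ne hj]
    exact Or.inr rfl

lemma IsThreeDecomposition.vertexBlowup_top_matching [Finite V]
    (hdec : IsThreeDecomposition G T C M) {ψ : Fin 3 → V} (hψ : Injective ψ)
    (hu : G.neighborSet u ⊆ Set.range ψ) {i : Fin 3} (hC : ∀ j, ¬ C.Adj u (ψ j))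
    (hM : ∀ j ≠ i, ¬ M.Adj u (ψ j)) :
    IsThreeDecomposition (G.vertexBlowup u ψ ⊤) (T.vertexBlowup u ψ (starGraph i))
      (C.vertexBlowup u ψ ⊥) (M.vertexBlowup u ψ (⊤ \ starGraph i)) := by
  refine hdec.vertexBlowup hψ hu (by rw [sup_bot_eq, sup_sdiff_cancel_right le_top])
    disjoint_bot_right disjoint_sdiff_self_right disjoint_bot_left (isTree_starGraph i)
    (fun j => ?_) (fun j => ?_)
  · rw [ncard_neighborSet_vertexBlowup_inr_of_not_adj (hC j), neighborSet_bot, Set.ncard_empty]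
    exact Or.inl rfl
  · by_cases hj : j = i
    · subst hj
      by_cases hMj : M.Adj u (ψ j)
      · simp [ncard_neighborSet_vertexBlowup_inr_of_adj hMj]
      · simp [ncard_neighborSet_vertexBlowup_inr_of_not_adj hMj]
    · rw [ncard_neighborSet_vertexBlowup_inr_of_not_adj (hM j hj),
        ncard_neighborSet_top_sdiff_starGraph_of_ne hj]

theorem IsThreeDecomposition.hasThreeDecomposition_vertexBlowup_top [Finite V]
    (hdec : IsThreeDecomposition G T C M) {ψ : Fin 3 → V} (hψ : Injective ψ)
    (hu : G.neighborSet u ⊆ Set.range ψ) :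
    HasThreeDecomposition (G.vertexBlowup u ψ ⊤) := by
  obtain ⟨hsup, -, -, -, -, hC, hM⟩ := isThreeDecomposition_iff.1 hdec
  by_cases hCe : ∃ j, C.Adj u (ψ j)
  · obtain ⟨j, hj⟩ := hCe
    have hC2 : {j | C.Adj u (ψ j)}.ncard = 2 := by
      rw [← ncard_neighborSet_eq_ncard_setOf_adj hψ
        ((neighborSet_mono (hsup ▸ le_sup_right.trans le_sup_left) u).trans hu)]
      exact (hC u).resolve_left (Set.ncard_ne_zero_of_mem (s := C.neighborSet u) hj)
    obtain ⟨i, hi⟩ : ∃ i, {j | C.Adj u (ψ j)}ᶜ = {i} := by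
      rw [← Set.ncard_eq_one]
      have := Set.ncard_add_ncard_compl {j | C.Adj u (ψ j)}
      rw [hC2, Nat.card_eq_fintype_card, Fintype.card_fin] at this
      omega
    have hmem : ∀ j, ¬ C.Adj u (ψ j) ↔ j = i := fun j => Set.ext_iff.1 hi j
    exact ⟨_, _, _, hdec.vertexBlowup_top_cycle hψ hu ((hmem i).2 rfl)
      fun j hj => not_not.1 (mt (hmem j).1 hj)⟩
  · simp only [not_exists] at hCe
    by_cases hMe : ∃ i, M.Adj u (ψ i)
    · obtain ⟨i, hi⟩ := hMe
      refine ⟨_, _, _, hdec.vertexBlowup_top_matching hψ hu (i := i) hCe fun j hj hMj => hj ?_⟩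
      exact hψ ((Set.ncard_le_one_iff (Set.toFinite _)).1 (hM u) hMj hi)
    · simp only [not_exists] at hMe
      exact ⟨_, _, _, hdec.vertexBlowup_top_matching hψ hu (i := 0) hCe fun j _ => hMe j⟩

lemma IsTransformationOf.exists_vertexBlowup {W : Type*} {H : SimpleGraph W}
    (hext : IsTransformationOf (starT (Fin 3)) triangleT G H) :
    ∃ (u : V) (ψ : Fin 3 → V), Injective ψ ∧ G.neighborSet u ⊆ Set.range ψ ∧
      Nonempty (H ≃g G.vertexBlowup u ψ ⊤) := by
  obtain ⟨φ, ψ, ⟨-, hadj, hinj⟩, -, ⟨e⟩⟩ := hext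
  have hrange : ∀ v, v ∈ Set.range φ ↔ v = φ 0 := by simp [Set.range_unique]
  have hstar : ∀ o, (starT (Fin 3)).Adj (inl 0) (inr o) := fun o => by simp [starT]
  refine ⟨φ 0, fun o => (ψ o).1, fun o o' h => hinj 0 (hstar o) (hstar o') (Subtype.ext h),
    fun v h => ?_, ?_⟩
  · obtain ⟨o, -, ho⟩ := (hadj 0 ⟨v, fun hv => h.ne ((hrange v).1 hv).symm⟩).1 h
    exact ⟨o, congrArg Subtype.val ho⟩
  · have hGψ : ∀ o, G.Adj (φ 0) (ψ o) := fun o => (hadj 0 (ψ o)).2 ⟨o, hstar o, rfl⟩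
    let f : {a // a ∉ Set.range φ} ≃ {a // a ≠ φ 0} :=
      Equiv.subtypeEquivRight fun a => not_congr (hrange a)
    refine ⟨e.trans ⟨Equiv.sumCongr f (Equiv.refl _), ?_⟩⟩
    rintro (a | j) (b | k) <;> simp [transform, triangleT, f] <;>
      grind [Adj.ne, G.adj_symm, Subtype.ext_iff]

lemma IsThreeDecomposition.comap {W W' : Type*} {K T C M : SimpleGraph W'} (f : W ≃ W')
    (h : IsThreeDecomposition K T C M) :
    IsThreeDecomposition (K.comap f) (T.comap f) (C.comap f) (M.comap f) := by
  rw [isThreeDecomposition_iff] at h ⊢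
  obtain ⟨hsup, hTC, hTM, hCM, htree, hC, hM⟩ := h
  have hdisj : ∀ {A B : SimpleGraph W'}, Disjoint A B → Disjoint (A.comap f) (B.comap f) :=
    fun h => disjoint_left.2 fun a b => disjoint_left.1 h (f a) (f b)
  have hdeg : ∀ (A : SimpleGraph W') a,
      ((A.comap f).neighborSet a).ncard = (A.neighborSet (f a)).ncard := fun A a =>
    Set.ncard_preimage_of_injective_subset_range f.injective
      (f.surjective.range_eq ▸ Set.subset_univ _)
  refine ⟨by rw [← hsup]; rfl, hdisj hTC, hdisj hTM, hdisj hCM, (Iso.comap f T).isTree_iff.2 htree,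
    fun a => ?_, fun a => ?_⟩
  · rw [hdeg]; exact hC (f a)
  · rw [hdeg]; exact hM (f a)

lemma HasThreeDecomposition.of_iso {W W' : Type*} {H : SimpleGraph W} {K : SimpleGraph W'}
    (h : HasThreeDecomposition K) (e : H ≃g K) : HasThreeDecomposition H := by
  obtain ⟨T, C, M, h⟩ := h
  have hK : K.comap e.toEquiv = H := by ext; exact e.map_adj_iff
  exact ⟨_, _, _, hK ▸ h.comap e.toEquiv⟩

end

theorem triangle_extension_compatible_general {V W : Type} [Finite V]
    (G : SimpleGraph V) (H : SimpleGraph W)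
    (hdec : HasThreeDecomposition G)
    (hext : IsTransformationOf (starT (Fin 3)) triangleT G H) :
    HasThreeDecomposition H := by
  obtain ⟨u, ψ, hψ, hu, ⟨e⟩⟩ := hext.exists_vertexBlowup
  obtain ⟨T, C, M, hdec⟩ := hdec
  exact (hdec.hasThreeDecomposition_vertexBlowup_top hψ hu).of_iso e

/-- The extension replacing a single vertex by a triangle is 3-compatible:
if the cubic graph `G` has a 3-decomposition and `H` is obtained from `G` by deleting a
vertex `u`, adding a triangle and joining its three vertices to the three former neighbours
of `u` (one each), then `H` has a 3-decomposition. -/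
theorem triangle_extension_compatible {V W : Type} [Finite V] [Finite W]
    (G : SimpleGraph V) (H : SimpleGraph W)
    (hcubic : IsCubic G) (hdec : HasThreeDecomposition G)
    (hext : IsTransformationOf (starT (Fin 3)) triangleT G H) :
    HasThreeDecomposition H :=
  triangle_extension_compatible_general G H hdec hext
end
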